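/- arXiv:1006.0874 — 4 statements merged into one kernel-verified Lean document; each statement's English description precedes it below -/
import Mathlib

section
/- Reflexive coequalizers of monoids can be computed in sets: if d₀, d₁ : M₁ → M₀ is a reflexive pair of monoid homomorphisms (with a common monoid-homomorphism section s₀), then the coequalizer Q of the underlying maps of sets carries a unique monoid structure such that the quotient map M₀ → Q is a monoid homomorphism, and with this structure Q is the coequalizer of (d₀, d₁) in the category of monoids. -/
/-- The relation whose quotient is the set-level coequalizer of `d0, d1`. -/
def mRel {M1 M0 : Type} (d0 d1 : M1 → M0) : M0 → M0 → Prop :=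
  fun a b => ∃ x, d0 x = a ∧ d1 x = b

/-- The quotient map `M0 → Q` is a monoid homomorphism for the monoid
structure `m` on the set-level coequalizer `Q`. -/
def mkIsMonoidHom {M1 M0 : Type} [Monoid M0] (d0 d1 : M1 → M0)
    (m : Monoid (Quot (mRel d0 d1))) : Prop := by
  letI := m
  exact Quot.mk (mRel d0 d1) 1 = 1 ∧
    ∀ a b : M0, Quot.mk (mRel d0 d1) (a * b) =
      Quot.mk (mRel d0 d1) a * Quot.mk (mRel d0 d1) b

/-- With the monoid structure `m`, the quotient is the coequalizer of
`(d0, d1)` in the category of monoids. -/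
def isMonoidCoeq {M1 M0 : Type} [Monoid M1] [Monoid M0] (d0 d1 : M1 →* M0)
    (m : Monoid (Quot (mRel ⇑d0 ⇑d1))) : Prop := by
  letI := m
  exact ∀ (N : Type) [Monoid N], ∀ f : M0 →* N, f.comp d0 = f.comp d1 →
    ∃! g : Quot (mRel ⇑d0 ⇑d1) →* N, ∀ a : M0, g (Quot.mk (mRel ⇑d0 ⇑d1) a) = f a

/-- Reflexive coequalizers of monoids can be computed in sets: the set-level
coequalizer of a reflexive pair of monoid homomorphisms carries a unique
monoid structure making the quotient map a monoid homomorphism, and with this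
structure it is the coequalizer in the category of monoids. -/
theorem monoid_reflexive_coeq {M1 M0 : Type} [Monoid M1] [Monoid M0]
    (d0 d1 : M1 →* M0) (s0 : M0 →* M1)
    (h0 : d0.comp s0 = MonoidHom.id M0) (h1 : d1.comp s0 = MonoidHom.id M0) :
    ∃ m : Monoid (Quot (mRel ⇑d0 ⇑d1)),
      mkIsMonoidHom ⇑d0 ⇑d1 m ∧
      (∀ m' : Monoid (Quot (mRel ⇑d0 ⇑d1)), mkIsMonoidHom ⇑d0 ⇑d1 m' → m' = m) ∧
      isMonoidCoeq d0 d1 m := by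
  have h0' : ∀ a, d0 (s0 a) = a := fun a => DFunLike.congr_fun h0 a
  have h1' : ∀ a, d1 (s0 a) = a := fun a => DFunLike.congr_fun h1 a
  set R := mRel ⇑d0 ⇑d1 with hR
  have hL : ∀ a a' b, R a a' → Quot.mk R (a * b) = Quot.mk R (a' * b) := by
    rintro a a' b ⟨x, rfl, rfl⟩
    exact Quot.sound ⟨x * s0 b, by simp [hR, mRel, h0'], by simp [hR, mRel, h1']⟩
  have hRt : ∀ a b b', R b b' → Quot.mk R (a * b) = Quot.mk R (a * b') := by
    rintro a b b' ⟨x, rfl, rfl⟩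
    exact Quot.sound ⟨s0 a * x, by simp [hR, mRel, h0'], by simp [hR, mRel, h1']⟩
  let mul : Quot R → Quot R → Quot R :=
    Quot.lift (fun a => Quot.lift (fun b => Quot.mk R (a * b)) (fun b b' h => hRt a b b' h))
      (fun a a' h => funext (Quot.ind fun b => hL a a' b h))
  letI : Mul (Quot R) := ⟨mul⟩
  letI : One (Quot R) := ⟨Quot.mk R 1⟩
  have mul_mk : ∀ a b : M0, Quot.mk R a * Quot.mk R b = Quot.mk R (a * b) :=
    fun _ _ => rfl
  letI m : Monoid (Quot R) :=
    { mul := (· * ·)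
      one := 1
      mul_assoc := by
        refine Quot.ind fun a => Quot.ind fun b => Quot.ind fun c => ?_
        simp only [mul_mk]
        exact congrArg (Quot.mk R) (mul_assoc a b c)
      one_mul := by
        refine Quot.ind fun a => ?_
        show Quot.mk R 1 * Quot.mk R a = Quot.mk R a
        rw [mul_mk, one_mul]
      mul_one := by
        refine Quot.ind fun a => ?_
        show Quot.mk R a * Quot.mk R 1 = Quot.mk R a
        rw [mul_mk, mul_one] }
  refine ⟨m, ⟨rfl, fun a b => rfl⟩, ?_, ?_⟩
  · intro m' hm'
    obtain ⟨h1m, hmulm⟩ := hm'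
    refine Monoid.ext ?_
    funext x y
    obtain ⟨a⟩ := x
    obtain ⟨b⟩ := y
    exact (hmulm a b).symm
  · intro N _ f hf
    have hfd : ∀ x, f (d0 x) = f (d1 x) := fun x => DFunLike.congr_fun hf x
    let g0 : Quot R → N := Quot.lift f (by rintro a b ⟨x, rfl, rfl⟩; exact hfd x)
    have g0_mk : ∀ a : M0, g0 (Quot.mk R a) = f a := fun _ => rfl
    refine ⟨{ toFun := g0, map_one' := f.map_one,
              map_mul' := by
                refine Quot.ind fun a => Quot.ind fun b => ?_
                show g0 (Quot.mk R a * Quot.mk R b) = g0 (Quot.mk R a) * g0 (Quot.mk R b)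
                rw [mul_mk, g0_mk, g0_mk, g0_mk, f.map_mul] },
            fun a => rfl, ?_⟩
    intro g hg
    ext x
    obtain ⟨a⟩ := x
    exact hg a
end

section
/- Monoid structures for the graded cartesian product correspond to left modules over the associative operad: for a graded set X, there is a bijection between (i) monoid structures on X with respect to ⊙ (an associative multiplication m : X ⊙ X → X with a two-sided unit e ∈ X(0)) and (ii) left A-module structures on X over the composition product (a map A ∘ X → X satisfying the unit and associativity axioms of a left operad module), where A is the associative operad with one point at each level. -/
def blockIdx {i : ℕ} (j : Fin i → ℕ) (k : Fin i) (t : Fin (j k)) : Fin (∑ l, j l) :=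
  ⟨(∑ l ∈ Finset.univ.filter (fun l : Fin i => l < k), j l) + t.val, by
    have h1 : (∑ l ∈ Finset.univ.filter (fun l : Fin i => l < k), j l)
        + ∑ l ∈ Finset.univ.filter (fun l : Fin i => ¬ l < k), j l = ∑ l, j l :=
      Finset.sum_filter_add_sum_filter_not _ _ _
    have h2 : j k ≤ ∑ l ∈ Finset.univ.filter (fun l : Fin i => ¬ l < k), j l :=
      Finset.single_le_sum (fun _ _ => Nat.zero_le _) (by simp)
    have h3 := t.isLt
    omega⟩

theorem blockIdx_mono {i : ℕ} (j : Fin i → ℕ) {k k' : Fin i} (h : k < k') :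
    (∑ l ∈ Finset.univ.filter (fun l : Fin i => l < k), j l) + j k
      ≤ ∑ l ∈ Finset.univ.filter (fun l : Fin i => l < k'), j l := by
  have hsub : insert k (Finset.univ.filter (fun l : Fin i => l < k))
      ⊆ Finset.univ.filter (fun l : Fin i => l < k') := by
    intro l hl
    simp only [Finset.mem_insert, Finset.mem_filter, Finset.mem_univ, true_and] at hl ⊢
    rcases hl with rfl | hl
    · exact h
    · exact lt_trans hl h
  have := Finset.sum_le_sum_of_subset hsub (f := j)
  rw [Finset.sum_insert (by simp)] at this
  omega

theorem blockIdx_bijective {i : ℕ} (j : Fin i → ℕ) :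
    Function.Bijective (fun p : Σ k : Fin i, Fin (j k) => blockIdx j p.1 p.2) := by
  rw [Fintype.bijective_iff_injective_and_card]
  constructor
  · rintro ⟨k, t⟩ ⟨k', t'⟩ hp
    have hv : ((∑ l ∈ Finset.univ.filter (fun l : Fin i => l < k), j l) + t.val)
        = (∑ l ∈ Finset.univ.filter (fun l : Fin i => l < k'), j l) + t'.val :=
      congrArg Fin.val hp
    have hkk : k = k' := by
      by_contra hne
      rcases lt_or_gt_of_ne hne with hlt | hlt
      · have := blockIdx_mono j hlt
        have := t.isLt
        omega
      · have := blockIdx_mono j hlt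
        have := t'.isLt
        omega
    subst hkk
    have : t = t' := Fin.ext (by omega)
    rw [this]
  · simp

noncomputable def blockEquiv {i : ℕ} (j : Fin i → ℕ) :
    (Σ k : Fin i, Fin (j k)) ≃ Fin (∑ l, j l) :=
  Equiv.ofBijective _ (blockIdx_bijective j)

theorem compPart_sum {i p n : ℕ} (j : Fin i → ℕ) (hj : ∑ k, j k = p)
    (j' : Fin p → ℕ) (hj' : ∑ k, j' k = n) :
    ∑ k : Fin i, ∑ t : Fin (j k), j' (Fin.cast hj (blockIdx j k t)) = n := by
  subst hj
  simp only [Fin.cast_refl, id_eq]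
  rw [← hj', ← Finset.sum_sigma Finset.univ (fun _ => Finset.univ)
      (fun p : Σ k : Fin i, Fin (j k) => j' (blockIdx j p.1 p.2)),
    Finset.univ_sigma_univ]
  exact Equiv.sum_comp (blockEquiv j) j'

/-- A monoid structure on a graded set `X` with respect to the graded
cartesian product `⊙`: associative unital pairings `X(i) × X(j) → X(i+j)`. -/
structure GMonoidStr (X : ℕ → Type) : Type where
  mul : ∀ {i j : ℕ}, X i → X j → X (i + j)
  one : X 0
  mul_assoc : ∀ {i j k : ℕ} (a : X i) (b : X j) (c : X k),
    HEq (mul (mul a b) c) (mul a (mul b c))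
  one_mul : ∀ {i : ℕ} (a : X i), HEq (mul one a) a
  mul_one : ∀ {i : ℕ} (a : X i), mul a one = a

/-- A left module structure on a graded set `X` over the associative operad
`A` (for the composition product): since `A(i)` is a point, the structure map
`A ∘ X → X` amounts to maps `X(j₁) × ⋯ × X(jᵢ) → X(n)` for every partition
`j₁ + ⋯ + jᵢ = n`, compatible with the operad unit and multiplication. -/
structure LeftAModuleStr (X : ℕ → Type) : Type where
  act : ∀ {i n : ℕ} (j : Fin i → ℕ), (∑ k, j k) = n → (∀ k, X (j k)) → X n
  act_one : ∀ (n : ℕ) (j : Fin 1 → ℕ) (h : (∑ k, j k) = n) (x : ∀ k, X (j k)),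
    HEq (act j h x) (x 0)
  act_comp : ∀ {i p n : ℕ} (r : Fin i → ℕ) (hr : (∑ k, r k) = p)
      (q : ∀ k : Fin i, Fin (r k) → ℕ) (m : Fin i → ℕ)
      (hq : ∀ k, (∑ t, q k t) = m k) (hm : (∑ k, m k) = n)
      (x : ∀ k t, X (q k t))
      (h' : (∑ s : Fin p,
        q ((blockEquiv r).symm (Fin.cast hr.symm s)).1
          ((blockEquiv r).symm (Fin.cast hr.symm s)).2) = n),
      act m hm (fun k => act (q k) (hq k) (x k)) =
        act (fun s => q ((blockEquiv r).symm (Fin.cast hr.symm s)).1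
            ((blockEquiv r).symm (Fin.cast hr.symm s)).2) h'
          (fun s => x ((blockEquiv r).symm (Fin.cast hr.symm s)).1
            ((blockEquiv r).symm (Fin.cast hr.symm s)).2)


section Aux

theorem offset_val {i : ℕ} (r : Fin i → ℕ) (k : Fin i) (t : Fin (r k)) :
    (blockIdx r k t).val
      = (∑ l ∈ Finset.univ.filter (fun l : Fin i => l < k), r l) + t.val := rfl

theorem offset_succ {i : ℕ} (r : Fin (i+1) → ℕ) (k : Fin i) :
    ∑ l ∈ Finset.univ.filter (fun l : Fin (i+1) => l < k.succ), r l
      = r 0 + ∑ l ∈ Finset.univ.filter (fun l : Fin i => l < k), r l.succ := by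
  rw [Finset.sum_filter, Finset.sum_filter, Fin.sum_univ_succ]
  congr 1
  · simp [Fin.succ_pos]

theorem blockEquiv_symm_zero {i : ℕ} (r : Fin (i+1) → ℕ) (s : Fin (∑ l, r l))
    (h : s.val < r 0) : (blockEquiv r).symm s = ⟨0, ⟨s.val, h⟩⟩ := by
  rw [Equiv.symm_apply_eq]
  show s = blockIdx r 0 ⟨s.val, h⟩
  apply Fin.ext
  rw [offset_val]
  have : Finset.univ.filter (fun l : Fin (i+1) => l < 0) = ∅ := by
    ext l; simp
  simp [this]

theorem blockEquiv_symm_succ {i : ℕ} (r : Fin (i+1) → ℕ)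
    (s : Fin (∑ l : Fin i, r l.succ)) (s' : Fin (∑ l, r l))
    (hs : s'.val = r 0 + s.val) :
    (blockEquiv r).symm s'
      = ⟨((blockEquiv (fun l => r l.succ)).symm s).1.succ,
          ((blockEquiv (fun l => r l.succ)).symm s).2⟩ := by
  rw [Equiv.symm_apply_eq]
  set p := (blockEquiv (fun l => r l.succ)).symm s with hp
  show s' = blockIdx r p.1.succ p.2
  have hback : blockIdx (fun l => r l.succ) p.1 p.2 = s :=
    (blockEquiv (fun l => r l.succ)).apply_symm_apply s
  apply Fin.ext
  rw [offset_val, offset_succ]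
  have hval : (blockIdx (fun l => r l.succ) p.1 p.2).val = s.val := by rw [hback]
  rw [offset_val] at hval
  omega

end Aux
section ToModule

variable {X : ℕ → Type}

def sigmaMonoid (G : GMonoidStr X) : Monoid (Σ n, X n) where
  mul a b := ⟨a.1 + b.1, G.mul a.2 b.2⟩
  one := ⟨0, G.one⟩
  mul_assoc a b c := Sigma.ext (add_assoc _ _ _) (G.mul_assoc _ _ _)
  one_mul a := Sigma.ext (zero_add _) (G.one_mul _)
  mul_one a := Sigma.ext (add_zero _) (heq_of_eq (G.mul_one _))

theorem fst_listProd (G : GMonoidStr X) (l : List (Σ n, X n)) :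
    (letI := sigmaMonoid G; l.prod.fst) = (l.map Sigma.fst).sum := by
  letI := sigmaMonoid G
  induction l with
  | nil => rfl
  | cons a l ih => rw [List.prod_cons, List.map_cons, List.sum_cons, ← ih]; rfl

theorem fst_ofFnProd (G : GMonoidStr X) {i : ℕ} (f : Fin i → Σ n, X n) :
    (letI := sigmaMonoid G; (List.ofFn f).prod.fst) = ∑ k, (f k).fst := by
  rw [fst_listProd, List.map_ofFn, ← List.sum_ofFn]
  rfl

def toX {n : ℕ} (m : Σ n, X n) (h : m.fst = n) : X n := h ▸ m.snd

theorem toX_heq {n : ℕ} (m : Σ n, X n) (h : m.fst = n) : HEq (toX m h) m.snd := by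
  subst h; rfl

theorem sigma_toX {n : ℕ} (m : Σ n, X n) (h : m.fst = n) :
    (⟨n, toX m h⟩ : Σ n, X n) = m := by
  subst h; rfl

theorem toX_congr {n : ℕ} {m m' : Σ n, X n} (hm : m = m') (h : m.fst = n)
    (h' : m'.fst = n) : toX m h = toX m' h' := by
  subst hm; rfl

theorem cast_self {n : ℕ} (h : n = n) (s : Fin n) : Fin.cast h s = s := rfl

theorem ofFn_cast {α : Type} {m n : ℕ} (h : m = n) (f : Fin n → α) :
    List.ofFn (fun s : Fin m => f (Fin.cast h s)) = List.ofFn f := by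
  subst h; rfl

/-- The key combinatorial lemma: a product over a flattened index set equals
the product of block products. -/
theorem prod_blocks {M : Type} [Monoid M] : ∀ {i : ℕ} (r : Fin i → ℕ)
    (F : ∀ k : Fin i, Fin (r k) → M),
    (List.ofFn fun s : Fin (∑ l, r l) =>
        F ((blockEquiv r).symm s).1 ((blockEquiv r).symm s).2).prod
      = (List.ofFn fun k => (List.ofFn fun t => F k t).prod).prod := by
  intro i
  induction i with
  | zero =>
    intro r F
    have h0 : (∑ l, r l) = 0 := by simp
    rw [show (List.ofFn fun s : Fin (∑ l, r l) =>
        F ((blockEquiv r).symm s).1 ((blockEquiv r).symm s).2) = [] from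
      List.eq_nil_of_length_eq_zero (by simp [h0])]
    rfl
  | succ i ih =>
    intro r F
    have hN : r 0 + (∑ l : Fin i, r l.succ) = ∑ l, r l := (Fin.sum_univ_succ r).symm
    rw [← ofFn_cast hN (fun s : Fin (∑ l, r l) =>
        F ((blockEquiv r).symm s).1 ((blockEquiv r).symm s).2)]
    rw [List.ofFn_add, List.prod_append]
    rw [List.ofFn_succ (f := fun k : Fin (i+1) => (List.ofFn fun t => F k t).prod),
      List.prod_cons]
    congr 1
    · -- first block
      refine congrArg List.prod (congrArg List.ofFn (funext fun s => ?_))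
      have hz := blockEquiv_symm_zero r (Fin.cast hN (Fin.castLE (Nat.le_add_right _ _) s))
        (by simpa using s.isLt)
      rw [hz]
      exact congrArg (F 0) (Fin.ext rfl)
    · -- remaining blocks
      have := ih (fun l => r l.succ) (fun k t => F k.succ t)
      rw [← this]
      refine congrArg List.prod (congrArg List.ofFn (funext fun s => ?_))
      have hsucc := blockEquiv_symm_succ r s (Fin.cast hN (Fin.natAdd _ s)) rfl
      rw [hsucc]

end ToModule
section ToModuleDef

variable {X : ℕ → Type}

def gact (G : GMonoidStr X) {i n : ℕ} (j : Fin i → ℕ) (h : (∑ k, j k) = n)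
    (x : ∀ k, X (j k)) : X n :=
  letI := sigmaMonoid G
  toX (List.ofFn fun k => (⟨j k, x k⟩ : Σ n, X n)).prod
    (by rw [fst_ofFnProd]; exact h)

theorem gact_one (G : GMonoidStr X) (n : ℕ) (j : Fin 1 → ℕ)
    (h : (∑ k, j k) = n) (x : ∀ k, X (j k)) :
    HEq (gact G j h x) (x 0) := by
  letI := sigmaMonoid G
  have hl : (List.ofFn fun k => (⟨j k, x k⟩ : Σ n, X n)).prod
      = ⟨j 0, x 0⟩ := by
    rw [List.ofFn_succ, List.ofFn_zero, List.prod_cons, List.prod_nil, mul_one]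
  have h2 : ((⟨j 0, x 0⟩ : Σ n, X n)).fst = n := by simpa using h
  unfold gact
  rw [toX_congr hl _ h2]
  exact toX_heq _ _

theorem gact_comp (G : GMonoidStr X) {i p n : ℕ} (r : Fin i → ℕ)
    (hr : (∑ k, r k) = p)
    (q : ∀ k : Fin i, Fin (r k) → ℕ) (m : Fin i → ℕ)
    (hq : ∀ k, (∑ t, q k t) = m k) (hm : (∑ k, m k) = n)
    (x : ∀ k t, X (q k t))
    (h' : (∑ s : Fin p,
      q ((blockEquiv r).symm (Fin.cast hr.symm s)).1
        ((blockEquiv r).symm (Fin.cast hr.symm s)).2) = n) :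
    gact G m hm (fun k => gact G (q k) (hq k) (x k)) =
      gact G (fun s => q ((blockEquiv r).symm (Fin.cast hr.symm s)).1
          ((blockEquiv r).symm (Fin.cast hr.symm s)).2) h'
        (fun s => x ((blockEquiv r).symm (Fin.cast hr.symm s)).1
          ((blockEquiv r).symm (Fin.cast hr.symm s)).2) := by
  letI := sigmaMonoid G
  subst hr
  have hinner : (List.ofFn fun k =>
      (⟨m k, gact G (q k) (hq k) (x k)⟩ : Σ n, X n)).prod
      = (List.ofFn fun k =>
          (List.ofFn fun t => (⟨q k t, x k t⟩ : Σ n, X n)).prod).prod := by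
    refine congrArg List.prod (congrArg List.ofFn (funext fun k => ?_))
    exact sigma_toX _ (by rw [fst_ofFnProd]; exact hq k)
  apply toX_congr
  exact hinner.trans (prod_blocks r (fun k t => (⟨q k t, x k t⟩ : Σ n, X n))).symm

def toModule (G : GMonoidStr X) : LeftAModuleStr X where
  act := gact G
  act_one := gact_one G
  act_comp := gact_comp G

end ToModuleDef
section FromModule

variable {X : ℕ → Type}

theorem act_congr_heq (L : LeftAModuleStr X) {i n n' : ℕ} {j j' : Fin i → ℕ}
    (hj : ∀ k, j k = j' k) (h : (∑ k, j k) = n) (h' : (∑ k, j' k) = n')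
    {x : ∀ k, X (j k)} {x' : ∀ k, X (j' k)} (hx : ∀ k, HEq (x k) (x' k)) :
    HEq (L.act j h x) (L.act j' h' x') := by
  have hje : j = j' := funext hj
  subst hje
  have hxe : x = x' := funext fun k => eq_of_heq (hx k)
  subst hxe
  have hn : n = n' := h.symm.trans h'
  subst hn
  rfl

theorem act_heq (L : LeftAModuleStr X) {i n n' : ℕ} (j : Fin i → ℕ)
    (h : (∑ k, j k) = n) (h' : (∑ k, j k) = n') (x : ∀ k, X (j k)) :
    HEq (L.act j h x) (L.act j h' x) :=
  act_congr_heq L (fun _ => rfl) h h' (fun _ => HEq.rfl)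

theorem act_single (L : LeftAModuleStr X) {n : ℕ}
    (h : (∑ _k : Fin 1, n) = n) (a : X n) :
    L.act (fun _ => n) h (fun _ => a) = a :=
  eq_of_heq (L.act_one n _ h _)

def pairIdx (i j : ℕ) : Fin 2 → ℕ
  | ⟨0, _⟩ => i
  | ⟨_+1, _⟩ => j

theorem pairIdx_sum (i j : ℕ) : (∑ k, pairIdx i j k) = i + j := by
  rw [Fin.sum_univ_two]; rfl

def pairElt {i j : ℕ} (a : X i) (b : X j) : ∀ k, X (pairIdx i j k)
  | ⟨0, _⟩ => a
  | ⟨_+1, _⟩ => b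

def pairQ {i₁ i₂ : ℕ} (j₁ : Fin i₁ → ℕ) (j₂ : Fin i₂ → ℕ) :
    ∀ k : Fin 2, Fin (pairIdx i₁ i₂ k) → ℕ
  | ⟨0, _⟩ => j₁
  | ⟨_+1, _⟩ => j₂

def pairX {i₁ i₂ : ℕ} {j₁ : Fin i₁ → ℕ} {j₂ : Fin i₂ → ℕ}
    (x₁ : ∀ t, X (j₁ t)) (x₂ : ∀ t, X (j₂ t)) :
    ∀ k, ∀ t : Fin (pairIdx i₁ i₂ k), X (pairQ j₁ j₂ k t)
  | ⟨0, _⟩ => x₁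
  | ⟨_+1, _⟩ => x₂

def lmul (L : LeftAModuleStr X) {i j : ℕ} (a : X i) (b : X j) : X (i + j) :=
  L.act (pairIdx i j) (pairIdx_sum i j) (pairElt a b)

theorem pair_dec_lt {i₁ i₂ : ℕ} (hr : (∑ k, pairIdx i₁ i₂ k) = i₁ + i₂)
    (v : ℕ) (hv : v < i₁ + i₂) (hc : v < i₁) :
    (blockEquiv (pairIdx i₁ i₂)).symm (Fin.cast hr.symm ⟨v, hv⟩) = ⟨0, ⟨v, hc⟩⟩ :=
  blockEquiv_symm_zero (pairIdx i₁ i₂) (Fin.cast hr.symm ⟨v, hv⟩) hc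

theorem pair_dec_ge {i₁ i₂ : ℕ} (hr : (∑ k, pairIdx i₁ i₂ k) = i₁ + i₂)
    (v : ℕ) (hv : v < i₁ + i₂) (hc : ¬ v < i₁) (hc2 : v - i₁ < i₂) :
    (blockEquiv (pairIdx i₁ i₂)).symm (Fin.cast hr.symm ⟨v, hv⟩)
      = ⟨1, ⟨v - i₁, hc2⟩⟩ := by
  have htail : (∑ l : Fin 1, pairIdx i₁ i₂ l.succ) = i₂ := by
    rw [Fin.sum_univ_one]; rfl
  have hu : v - i₁ < ∑ l : Fin 1, pairIdx i₁ i₂ l.succ := by omega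
  have hstep := blockEquiv_symm_succ (pairIdx i₁ i₂) ⟨v - i₁, hu⟩
    (Fin.cast hr.symm ⟨v, hv⟩) (show v = i₁ + (v - i₁) by omega)
  rw [hstep]
  have hz := blockEquiv_symm_zero (fun l : Fin 1 => pairIdx i₁ i₂ l.succ)
    (⟨v - i₁, hu⟩ : Fin (∑ l : Fin 1, pairIdx i₁ i₂ l.succ)) (show v - i₁ < i₂ from hc2)
  rw [hz]; rfl

theorem act_pair (L : LeftAModuleStr X) {i₁ i₂ n₁ n₂ : ℕ}
    (j₁ : Fin i₁ → ℕ) (j₂ : Fin i₂ → ℕ)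
    (h₁ : (∑ t, j₁ t) = n₁) (h₂ : (∑ t, j₂ t) = n₂)
    (x₁ : ∀ t, X (j₁ t)) (x₂ : ∀ t, X (j₂ t))
    (J : Fin (i₁ + i₂) → ℕ)
    (hJ₁ : ∀ s : Fin i₁, J (Fin.castAdd i₂ s) = j₁ s)
    (hJ₂ : ∀ s : Fin i₂, J (Fin.natAdd i₁ s) = j₂ s)
    (Y : ∀ s, X (J s))
    (hY₁ : ∀ s : Fin i₁, HEq (Y (Fin.castAdd i₂ s)) (x₁ s))
    (hY₂ : ∀ s : Fin i₂, HEq (Y (Fin.natAdd i₁ s)) (x₂ s))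
    (hsum : (∑ s, J s) = n₁ + n₂) :
    lmul L (L.act j₁ h₁ x₁) (L.act j₂ h₂ x₂) = L.act J hsum Y := by
  have hr : (∑ k, pairIdx i₁ i₂ k) = i₁ + i₂ := pairIdx_sum i₁ i₂
  have hq : ∀ k, (∑ t, pairQ j₁ j₂ k t) = pairIdx n₁ n₂ k := by
    intro ⟨v, hv⟩
    match v, hv with
    | 0, _ => exact h₁
    | v+1, _ => exact h₂
  have hj' : ∀ s : Fin (i₁ + i₂),
      pairQ j₁ j₂ ((blockEquiv (pairIdx i₁ i₂)).symm (Fin.cast hr.symm s)).1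
        ((blockEquiv (pairIdx i₁ i₂)).symm (Fin.cast hr.symm s)).2 = J s := by
    intro ⟨v, hv⟩
    by_cases hc : v < i₁
    · rw [pair_dec_lt hr v hv hc]
      rw [show (⟨v, hv⟩ : Fin (i₁ + i₂)) = Fin.castAdd i₂ ⟨v, hc⟩ from Fin.ext rfl]
      exact (hJ₁ ⟨v, hc⟩).symm
    · have hc2 : v - i₁ < i₂ := by omega
      rw [pair_dec_ge hr v hv hc hc2]
      rw [show (⟨v, hv⟩ : Fin (i₁ + i₂)) = Fin.natAdd i₁ ⟨v - i₁, hc2⟩ from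
        Fin.ext (by simp; omega)]
      exact (hJ₂ ⟨v - i₁, hc2⟩).symm
  have hx' : ∀ s : Fin (i₁ + i₂),
      HEq (pairX x₁ x₂ ((blockEquiv (pairIdx i₁ i₂)).symm (Fin.cast hr.symm s)).1
        ((blockEquiv (pairIdx i₁ i₂)).symm (Fin.cast hr.symm s)).2) (Y s) := by
    intro ⟨v, hv⟩
    by_cases hc : v < i₁
    · rw [pair_dec_lt hr v hv hc]
      rw [show (⟨v, hv⟩ : Fin (i₁ + i₂)) = Fin.castAdd i₂ ⟨v, hc⟩ from Fin.ext rfl]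
      exact (hY₁ ⟨v, hc⟩).symm
    · have hc2 : v - i₁ < i₂ := by omega
      rw [pair_dec_ge hr v hv hc hc2]
      rw [show (⟨v, hv⟩ : Fin (i₁ + i₂)) = Fin.natAdd i₁ ⟨v - i₁, hc2⟩ from
        Fin.ext (by simp; omega)]
      exact (hY₂ ⟨v - i₁, hc2⟩).symm
  have h' : (∑ s : Fin (i₁ + i₂),
      pairQ j₁ j₂ ((blockEquiv (pairIdx i₁ i₂)).symm (Fin.cast hr.symm s)).1
        ((blockEquiv (pairIdx i₁ i₂)).symm (Fin.cast hr.symm s)).2) = n₁ + n₂ := by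
    rw [← hsum]
    exact Finset.sum_congr rfl fun s _ => hj' s
  calc lmul L (L.act j₁ h₁ x₁) (L.act j₂ h₂ x₂)
      = L.act (pairIdx n₁ n₂) (pairIdx_sum n₁ n₂)
          (fun k => L.act (pairQ j₁ j₂ k) (hq k) (pairX x₁ x₂ k)) := by
        refine congrArg (L.act (pairIdx n₁ n₂) (pairIdx_sum n₁ n₂))
          (funext fun k => ?_)
        match k with
        | ⟨0, _⟩ => rfl
        | ⟨v+1, _⟩ => rfl
    _ = L.act _ h' _ :=
        L.act_comp (pairIdx i₁ i₂) hr (pairQ j₁ j₂) (pairIdx n₁ n₂) hq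
          (pairIdx_sum n₁ n₂) (pairX x₁ x₂) h'
    _ = L.act J hsum Y := eq_of_heq (act_congr_heq L hj' h' hsum hx')

end FromModule
section FromModuleDef

variable {X : ℕ → Type}

def triIdx (i j k : ℕ) : Fin 3 → ℕ
  | ⟨0, _⟩ => i
  | ⟨1, _⟩ => j
  | ⟨_+2, _⟩ => k

def triElt {i j k : ℕ} (a : X i) (b : X j) (c : X k) : ∀ s, X (triIdx i j k s)
  | ⟨0, _⟩ => a
  | ⟨1, _⟩ => b
  | ⟨_+2, _⟩ => c

def fromModule (L : LeftAModuleStr X) : GMonoidStr X where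
  mul a b := lmul L a b
  one := L.act (fun _ : Fin 0 => 0) (by simp) (fun t => t.elim0)
  mul_assoc {i j k} a b c := by
    have h₂ : (∑ _t : Fin 1, k) = k := by rw [Fin.sum_univ_one]
    have hsum1 : (∑ s : Fin (2+1), triIdx i j k s) = (i + j) + k := by
      rw [Fin.sum_univ_three]; rfl
    have e1 := act_pair L (pairIdx i j) (fun _ : Fin 1 => k)
      (pairIdx_sum i j) h₂ (pairElt a b) (fun _ => c) (triIdx i j k)
      (fun s => match s with
        | ⟨0, _⟩ => rfl
        | ⟨1, _⟩ => rfl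
        | ⟨_+2, h⟩ => absurd h (by omega))
      (fun s => match s with
        | ⟨0, _⟩ => rfl
        | ⟨_+1, h⟩ => absurd h (by omega))
      (triElt a b c)
      (fun s => match s with
        | ⟨0, _⟩ => HEq.rfl
        | ⟨1, _⟩ => HEq.rfl
        | ⟨_+2, h⟩ => absurd h (by omega))
      (fun s => match s with
        | ⟨0, _⟩ => HEq.rfl
        | ⟨_+1, h⟩ => absurd h (by omega))
      hsum1
    rw [act_single L h₂ c] at e1
    have h₁' : (∑ _t : Fin 1, i) = i := by rw [Fin.sum_univ_one]
    have hsum2 : (∑ s : Fin (1+2), triIdx i j k s) = i + (j + k) := by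
      rw [Fin.sum_univ_three]; show i + j + k = i + (j + k); omega
    have e2 := act_pair L (fun _ : Fin 1 => i) (pairIdx j k)
      h₁' (pairIdx_sum j k) (fun _ => a) (pairElt b c) (triIdx i j k)
      (fun s => match s with
        | ⟨0, _⟩ => rfl
        | ⟨_+1, h⟩ => absurd h (by omega))
      (fun s => match s with
        | ⟨0, _⟩ => rfl
        | ⟨1, _⟩ => rfl
        | ⟨_+2, h⟩ => absurd h (by omega))
      (triElt a b c)
      (fun s => match s with
        | ⟨0, _⟩ => HEq.rfl
        | ⟨_+1, h⟩ => absurd h (by omega))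
      (fun s => match s with
        | ⟨0, _⟩ => HEq.rfl
        | ⟨1, _⟩ => HEq.rfl
        | ⟨_+2, h⟩ => absurd h (by omega))
      hsum2
    rw [act_single L h₁' a] at e2
    exact (heq_of_eq e1).trans
      ((act_heq L (triIdx i j k) hsum1 hsum2 (triElt a b c)).trans
        (heq_of_eq e2).symm)
  one_mul {i} a := by
    have h₁ : (∑ _t : Fin 0, (0:ℕ)) = 0 := by simp
    have h₂ : (∑ _t : Fin 1, i) = i := by rw [Fin.sum_univ_one]
    have hsum : (∑ _s : Fin (0+1), i) = 0 + i := by rw [Fin.sum_univ_one]; omega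
    have e := act_pair L (fun _ : Fin 0 => 0) (fun _ : Fin 1 => i)
      h₁ h₂ (fun t => t.elim0) (fun _ => a) (fun _ : Fin (0+1) => i)
      (fun s => s.elim0) (fun _ => rfl)
      (fun _ => a) (fun s => s.elim0) (fun _ => HEq.rfl) hsum
    rw [act_single L h₂ a] at e
    exact (heq_of_eq e).trans (L.act_one (0 + i) _ hsum _)
  mul_one {i} a := by
    have h₁ : (∑ _t : Fin 1, i) = i := by rw [Fin.sum_univ_one]
    have h₂ : (∑ _t : Fin 0, (0:ℕ)) = 0 := by simp
    have hsum : (∑ _s : Fin (1+0), i) = i + 0 := by rw [Fin.sum_univ_one]; omega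
    have e := act_pair L (fun _ : Fin 1 => i) (fun _ : Fin 0 => 0)
      h₁ h₂ (fun _ => a) (fun t => t.elim0) (fun _ : Fin (1+0) => i)
      (fun _ => rfl) (fun s => s.elim0)
      (fun _ => a) (fun _ => HEq.rfl) (fun s => s.elim0) hsum
    rw [act_single L h₁ a] at e
    exact e

end FromModuleDef
section RoundTrip

variable {X : ℕ → Type}

theorem GMonoidStr.ext' {A B : GMonoidStr X}
    (hm : ∀ (i j : ℕ) (a : X i) (b : X j), A.mul a b = B.mul a b)
    (ho : A.one = B.one) : A = B := by
  obtain ⟨m1, o1, p1, p2, p3⟩ := A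
  obtain ⟨m2, o2, q1, q2, q3⟩ := B
  have hm' : @m1 = @m2 :=
    funext fun i => funext fun j => funext fun a => funext fun b => hm i j a b
  subst hm'
  have ho' : o1 = o2 := ho
  subst ho'
  rfl

theorem LeftAModuleStr.ext' {A B : LeftAModuleStr X}
    (h : ∀ (i n : ℕ) (j : Fin i → ℕ) (hj : (∑ k, j k) = n) (x : ∀ k, X (j k)),
      A.act j hj x = B.act j hj x) : A = B := by
  obtain ⟨a1, p1, p2⟩ := A
  obtain ⟨a2, q1, q2⟩ := B
  have ha : @a1 = @a2 :=
    funext fun i => funext fun n => funext fun j => funext fun hj =>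
      funext fun x => h i n j hj x
  subst ha
  rfl

theorem fromModule_toModule (G : GMonoidStr X) : fromModule (toModule G) = G := by
  apply GMonoidStr.ext'
  · intro i j a b
    show gact G (pairIdx i j) (pairIdx_sum i j) (pairElt a b) = G.mul a b
    letI := sigmaMonoid G
    have hl : (List.ofFn fun k =>
        (⟨pairIdx i j k, pairElt a b k⟩ : Σ n, X n)).prod = ⟨i + j, G.mul a b⟩ := by
      have hlist : (List.ofFn fun k : Fin 2 =>
          (⟨pairIdx i j k, pairElt a b k⟩ : Σ n, X n))
          = [⟨i, a⟩, ⟨j, b⟩] := by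
        rw [List.ofFn_succ, List.ofFn_succ, List.ofFn_zero]
        rfl
      rw [hlist, List.prod_cons, List.prod_cons, List.prod_nil, mul_one]
      rfl
    exact toX_congr hl _ rfl
  · show gact G (fun _ : Fin 0 => 0) (by simp) (fun t => t.elim0) = G.one
    letI := sigmaMonoid G
    have hl : (List.ofFn fun k : Fin 0 =>
        (⟨(fun _ : Fin 0 => (0:ℕ)) k, (fun t : Fin 0 => t.elim0) k⟩ : Σ n, X n)).prod
        = ⟨0, G.one⟩ := by
      rw [List.ofFn_zero, List.prod_nil]
      rfl
    exact toX_congr hl _ rfl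

theorem act_cast_heq (L : LeftAModuleStr X) {i i' n n' : ℕ} (hii : i' = i)
    (j : Fin i → ℕ) (h' : (∑ s : Fin i', j (Fin.cast hii s)) = n')
    (h : (∑ k, j k) = n) (x : ∀ k, X (j k)) :
    HEq (L.act (fun s => j (Fin.cast hii s)) h' (fun s => x (Fin.cast hii s)))
      (L.act j h x) := by
  subst hii
  exact act_heq L j h' h x

theorem prod_eq (L : LeftAModuleStr X) : ∀ {i : ℕ} (j : Fin i → ℕ)
    (x : ∀ k, X (j k)),
    (letI := sigmaMonoid (fromModule L);
      (List.ofFn fun k => (⟨j k, x k⟩ : Σ n, X n)).prod)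
      = ⟨∑ k, j k, L.act j rfl x⟩ := by
  intro i
  induction i with
  | zero =>
    intro j x
    refine Sigma.ext (by show (0:ℕ) = ∑ k : Fin 0, j k; simp) ?_
    show HEq (L.act (fun _ : Fin 0 => 0) _ (fun t => t.elim0)) (L.act j rfl x)
    exact act_congr_heq L (fun k => k.elim0) _ rfl (fun k => k.elim0)
  | succ i ih =>
    intro j x
    letI := sigmaMonoid (fromModule L)
    rw [List.ofFn_succ, List.prod_cons, ih (fun s => j s.succ) (fun s => x s.succ)]
    refine Sigma.ext ((Fin.sum_univ_succ j).symm) ?_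
    show HEq (lmul L (x 0) (L.act (fun s => j s.succ) rfl (fun s => x s.succ)))
      (L.act j rfl x)
    have hcast : 1 + i = i + 1 := by omega
    have h₁ : (∑ _t : Fin 1, j 0) = j 0 := by rw [Fin.sum_univ_one]
    have hsum : (∑ s : Fin (1+i), j (Fin.cast hcast s))
        = j 0 + ∑ s : Fin i, j s.succ := by
      have hc : (∑ s : Fin (1+i), j (Fin.cast hcast s)) = ∑ k, j k :=
        Equiv.sum_comp (finCongr hcast) j
      rw [hc, Fin.sum_univ_succ]
    have e := act_pair L (fun _ : Fin 1 => j 0) (fun s => j s.succ)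
      h₁ rfl (fun _ => x 0) (fun s => x s.succ)
      (fun s : Fin (1+i) => j (Fin.cast hcast s))
      (fun s => congrArg j (Fin.ext (by
        simp only [Fin.coe_cast, Fin.coe_castAdd, Fin.val_zero]
        have := s.isLt; omega)))
      (fun s => congrArg j (Fin.ext (by
        simp only [Fin.coe_cast, Fin.coe_natAdd, Fin.val_succ]; omega)))
      (fun s => x (Fin.cast hcast s))
      (fun s => by
        have harg : Fin.cast hcast (Fin.castAdd i s) = (0 : Fin (i+1)) :=
          Fin.ext (by
            simp only [Fin.coe_cast, Fin.coe_castAdd, Fin.val_zero]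
            have := s.isLt; omega)
        show HEq (x (Fin.cast hcast (Fin.castAdd i s))) (x 0)
        rw [harg])
      (fun s => by
        have harg : Fin.cast hcast (Fin.natAdd 1 s) = s.succ :=
          Fin.ext (by
            simp only [Fin.coe_cast, Fin.coe_natAdd, Fin.val_succ]; omega)
        show HEq (x (Fin.cast hcast (Fin.natAdd 1 s))) (x s.succ)
        rw [harg])
      hsum
    rw [act_single L h₁ (x 0)] at e
    exact (heq_of_eq e).trans (act_cast_heq L hcast j hsum rfl x)

theorem toModule_fromModule (L : LeftAModuleStr X) :
    toModule (fromModule L) = L := by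
  apply LeftAModuleStr.ext'
  intro i n j hj x
  subst hj
  show gact (fromModule L) j rfl x = L.act j rfl x
  exact toX_congr (prod_eq L j x) _ rfl

end RoundTrip
/-- Monoid structures for the graded cartesian product correspond bijectively
to left modules over the associative operad. -/
theorem gmonoid_equiv_leftAModule (X : ℕ → Type) :
    Nonempty (GMonoidStr X ≃ LeftAModuleStr X) := by
  exact ⟨{ toFun := toModule, invFun := fromModule,
           left_inv := fromModule_toModule, right_inv := toModule_fromModule }⟩
end

section
/- The McClure–Smith construction yields a cosimplicial object: let O be an operad of sets and suppose given ε ∈ O(0) and μ ∈ O(2) such that μ(μ, id) = μ(id, μ) in O(3) and μ(ε, id) = id = μ(id, ε) in O(1) (operadic composition, with id the operad unit in O(1)). Define, for f ∈ O(n), coface maps dⁱ : O(n) → O(n+1) by d⁰f = μ(id, f), d^{n+1}f = μ(f, id), and for 1 ≤ i ≤ n, dⁱf = f ∘ᵢ μ (composing μ into the i-th input of f), and codegeneracies sᵢ : O(n) → O(n−1) by sᵢ f = f with ε composed into the (i+1)-st input. Then these maps satisfy all the cosimplicial identities: d^j d^i = d^i d^{j−1} for i < j, s_j s_i = s_i s_{j+1}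 for i ≤ j, and s_j d^i = d^i s_{j−1} for i < j, = id for i = j, j+1, and = d^{i−1} s_j for i > j+1. -/
set_option maxHeartbeats 2000000


/-- A (non-symmetric) operad of sets: sets `O(n)`, an identity element in
`O(1)`, and composition maps
`O(i) × O(j₁) × ⋯ × O(jᵢ) → O(j₁ + ⋯ + jᵢ)` satisfying associativity and
unit axioms. -/
structure SetOperad : Type 1 where
  O : ℕ → Type
  unit : O 1
  comp : ∀ {i n : ℕ} (j : Fin i → ℕ), (∑ k, j k) = n → O i → (∀ k, O (j k)) → O n
  comp_unit : ∀ (i : ℕ) (h : (∑ _k : Fin i, 1) = i) (f : O i),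
    comp (fun _ => 1) h f (fun _ => unit) = f
  unit_comp : ∀ (n : ℕ) (j : Fin 1 → ℕ) (h : (∑ k, j k) = n) (g : ∀ k, O (j k)),
    HEq (comp j h unit g) (g 0)
  comp_assoc : ∀ {i p n : ℕ} (j : Fin i → ℕ) (hj : (∑ k, j k) = p)
      (f : O i) (g : ∀ k, O (j k)) (q : Fin p → ℕ) (hq : (∑ t, q t) = n)
      (h : ∀ t, O (q t)),
      comp q hq (comp j hj f g) h =
        comp (fun k => ∑ t : Fin (j k), q (Fin.cast hj (blockIdx j k t)))
          (compPart_sum j hj q hq) f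
          (fun k => comp (fun t => q (Fin.cast hj (blockIdx j k t))) rfl (g k)
            (fun t => h (Fin.cast hj (blockIdx j k t))))

theorem sum_ite_single {n : ℕ} (i : Fin n) (m : ℕ) :
    (∑ k : Fin n, if k = i then m else 1) = n - 1 + m := by
  have h1 : (fun k : Fin n => if k = i then m else 1) = Function.update (fun _ => 1) i m := by
    funext k
    by_cases h : k = i <;> simp [Function.update, h]
  rw [h1, Finset.sum_update_of_mem (Finset.mem_univ i)]
  have h2 : ∑ k ∈ Finset.univ \ {i}, (1 : ℕ) = n - 1 := by
    rw [Finset.sum_const, smul_eq_mul, mul_one, Finset.card_sdiff]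
    simp
  have h3 := i.isLt
  omega

/-- Partial composition `f ∘ᵢ g`: compose `g` into the `i`-th input of `f`,
all other inputs filled with the identity.  (The result level `r = n - 1 + m`
is recorded via the hypothesis `h`.) -/
def pcomp (P : SetOperad) {n m r : ℕ} (h : n - 1 + m = r) (f : P.O n) (i : Fin n)
    (g : P.O m) : P.O r :=
  P.comp (fun k => if k = i then m else 1) (by rw [sum_ite_single]; exact h) f
    (fun k => if hk : k = i then cast (congrArg P.O (if_pos hk)).symm g
      else cast (congrArg P.O (if_neg hk)).symm P.unit)

/-- The McClure–Smith coface maps `dⁱ : O(n) → O(n+1)` determined by `μ`: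
`d⁰f = μ(id, f)`, `dⁿ⁺¹f = μ(f, id)`, and `dⁱf = f ∘ᵢ μ` for `1 ≤ i ≤ n`. -/
def coface (P : SetOperad) (mu : P.O 2) (n : ℕ) (i : Fin (n + 2)) (f : P.O n) :
    P.O (n + 1) :=
  if h0 : i.val = 0 then pcomp P (by omega) mu 1 f
  else if h1 : i.val = n + 1 then pcomp P (by omega) mu 0 f
  else pcomp P (by have := i.isLt; omega) f ⟨i.val - 1, by have := i.isLt; omega⟩ mu

/-- The McClure–Smith codegeneracy maps `sᵢ : O(n+1) → O(n)` determined by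
`ε`: compose `ε` into the `(i+1)`-st input. -/
def codeg (P : SetOperad) (eps : P.O 0) (n : ℕ) (i : Fin (n + 1)) (f : P.O (n + 1)) :
    P.O n :=
  pcomp P (by omega) f i eps

theorem comp_heq (P : SetOperad) {i i' n n' : ℕ} (hii : i = i') (hnn : n = n')
    {j : Fin i → ℕ} {j' : Fin i' → ℕ} (hjj : ∀ k, j k = j' (Fin.cast hii k))
    {h : (∑ k, j k) = n} {h' : (∑ k, j' k) = n'}
    {f : P.O i} {f' : P.O i'} (hf : HEq f f')
    {g : ∀ k, P.O (j k)} {g' : ∀ k, P.O (j' k)}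
    (hg : ∀ k, HEq (g k) (g' (Fin.cast hii k))) :
    HEq (P.comp j h f g) (P.comp j' h' f' g') := by
  subst hii hnn
  have hj : j = j' := funext fun k => hjj k
  subst hj
  have : f = f' := eq_of_heq hf
  subst this
  have : g = g' := funext fun k => eq_of_heq (hg k)
  subst this
  rfl

theorem comp_congr (P : SetOperad) {i n : ℕ} {j j' : Fin i → ℕ}
    (hjj : ∀ k, j k = j' k) {h : (∑ k, j k) = n} {h' : (∑ k, j' k) = n}
    (f : P.O i) {g : ∀ k, P.O (j k)} {g' : ∀ k, P.O (j' k)}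
    (hg : ∀ k, HEq (g k) (g' k)) :
    P.comp j h f g = P.comp j' h' f g' :=
  eq_of_heq (comp_heq P rfl rfl hjj HEq.rfl hg)

theorem unit_pcomp (P : SetOperad) {m : ℕ} (h : 1 - 1 + m = m) (g : P.O m) :
    pcomp P h P.unit 0 g = g := by
  unfold pcomp
  refine eq_of_heq (HEq.trans (P.unit_comp m _ _ _) ?_)
  simp

theorem sum_range_ite (N v my : ℕ) :
    ∑ t ∈ Finset.range N, (if t = v then my else 1) =
      if v < N then N - 1 + my else N := by
  induction N with
  | zero => simp
  | succ N ih =>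
    rw [Finset.sum_range_succ, ih]
    split_ifs <;> omega

theorem offset_point {n : ℕ} (a : Fin n) (m : ℕ) (k : Fin n) :
    ∑ l ∈ Finset.univ.filter (fun l : Fin n => l < k), (if l = a then m else 1)
      = if a < k then k.val - 1 + m else k.val := by
  have hs : Finset.univ.filter (fun l : Fin n => l < k) = Finset.Iio k := by
    ext; simp
  rw [hs]
  by_cases h : a < k
  · rw [if_pos h, ← Finset.insert_erase (show a ∈ Finset.Iio k by simpa using h),
      Finset.sum_insert (Finset.notMem_erase _ _), if_pos rfl]
    have h2 : ∑ l ∈ (Finset.Iio k).erase a, (if l = a then m else 1)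
        = ∑ l ∈ (Finset.Iio k).erase a, 1 :=
      Finset.sum_congr rfl fun l hl => if_neg (Finset.ne_of_mem_erase hl)
    rw [h2, Finset.sum_const, smul_eq_mul, mul_one,
      Finset.card_erase_of_mem (by simpa using h), Fin.card_Iio]
    omega
  · rw [if_neg h]
    have h2 : ∑ l ∈ Finset.Iio k, (if l = a then m else 1)
        = ∑ l ∈ Finset.Iio k, 1 := by
      refine Finset.sum_congr rfl fun l hl => if_neg fun he => ?_
      subst he
      exact h (Finset.mem_Iio.mp hl)
    rw [h2, Finset.sum_const, smul_eq_mul, mul_one, Fin.card_Iio]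

theorem pcomp_unit (P : SetOperad) {n : ℕ} (h : n - 1 + 1 = n) (f : P.O n)
    (i : Fin n) : pcomp P h f i P.unit = f := by
  unfold pcomp
  rw [comp_congr P (j' := fun _ : Fin n => 1) (fun k => by simp)
    (h' := by simp) f (g' := fun _ => P.unit) (fun k => ?_)]
  · exact P.comp_unit n (by simp) f
  · by_cases hk : k = i
    · rw [dif_pos hk]; exact cast_heq _ _
    · rw [dif_neg hk]; exact cast_heq _ _

theorem sum_range_point (N o v my : ℕ) :
    ∑ c ∈ Finset.range N, (if o + c = v then my else 1) =
      if o ≤ v ∧ v < o + N then N - 1 + my else N := by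
  induction N with
  | zero => rw [Finset.range_zero, Finset.sum_empty, if_neg (by omega)]
  | succ N ih =>
    rw [Finset.sum_range_succ, ih]
    split_ifs <;> omega

theorem blockIdx_point_val {n : ℕ} (a : Fin n) (m : ℕ) (k : Fin n)
    (t : Fin (if k = a then m else 1)) :
    (blockIdx (fun l : Fin n => if l = a then m else 1) k t).val
      = (if a < k then k.val - 1 + m else k.val) + t.val := by
  show (∑ l ∈ Finset.univ.filter (fun l : Fin n => l < k), if l = a then m else 1) + t.val = _
  rw [offset_point]

theorem pcomp_nest (P : SetOperad) {n mg mh r1 r2 r1' : ℕ}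
    (h1 : n - 1 + mg = r1) (h2 : r1 - 1 + mh = r2)
    (h1' : mg - 1 + mh = r1') (h2' : n - 1 + r1' = r2)
    (f : P.O n) (i : Fin n) (g : P.O mg) (t : Fin mg) (h : P.O mh) :
    pcomp P h2 (pcomp P h1 f i g)
        ⟨i.val + t.val, by have := i.isLt; have := t.isLt; omega⟩ h =
      pcomp P h2' f i (pcomp P h1' g t h) := by
  unfold pcomp
  rw [P.comp_assoc]
  have key : ∀ k : Fin n,
      (∑ t1 : Fin (if k = i then mg else 1),
        if Fin.cast (by rw [sum_ite_single]; exact h1)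
            (blockIdx (fun l : Fin n => if l = i then mg else 1) k t1) =
          (⟨i.val + t.val, by have := i.isLt; have := t.isLt; omega⟩ : Fin r1)
        then mh else 1) = (if k = i then r1' else 1) := by
    intro k
    have hvk := k.isLt; have hvi := i.isLt; have hvt := t.isLt
    have step : ∀ t1 : Fin (if k = i then mg else 1),
        (if Fin.cast (by rw [sum_ite_single]; exact h1)
            (blockIdx (fun l : Fin n => if l = i then mg else 1) k t1) =
            (⟨i.val + t.val, by omega⟩ : Fin r1) then mh else 1)
          = (fun c => if (∑ l ∈ Finset.univ.filter (fun l : Fin n => l < k),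
              if l = i then mg else 1) + c = i.val + t.val then mh else 1) t1.val :=
      fun t1 => if_congr Fin.ext_iff rfl rfl
    rw [Finset.sum_congr rfl fun t1 _ => step t1,
      Fin.sum_univ_eq_sum_range (fun c => if (∑ l ∈ Finset.univ.filter (fun l : Fin n => l < k),
        if l = i then mg else 1) + c = i.val + t.val then mh else 1) (if k = i then mg else 1),
      sum_range_point, offset_point]
    by_cases hk : k = i
    · subst hk
      rw [if_neg (lt_irrefl _), if_pos rfl, if_pos (by omega), if_pos rfl]
      omega
    · have hk2 : k.val ≠ i.val := fun hv => hk (Fin.ext hv)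
      rw [if_neg hk, if_neg hk]
      by_cases hik : i < k
      · have hik2 := Fin.lt_def.mp hik
        rw [if_pos hik, if_neg (by omega)]
      · have hik2 : ¬ i.val < k.val := fun hh => hik (Fin.lt_def.mpr hh)
        rw [if_neg hik, if_neg (by omega)]
  refine comp_congr P (fun k => key k) f (fun k => ?_)
  by_cases hk : k = i
  · have hki := congrArg Fin.val hk
    have hik : ¬ i < k := fun hh => by rw [hk] at hh; exact lt_irrefl _ hh
    have hvt := t.isLt
    have hcond : ∀ t1 : Fin (if k = i then mg else 1),
        ((if i < k then k.val - 1 + mg else k.val) + t1.val = i.val + t.val)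
          ↔ t1.val = t.val := by
      intro t1
      rw [if_neg hik]
      omega
    simp only [dif_pos hk]
    refine HEq.trans (comp_heq P (if_pos hk) ((key k).trans (if_pos hk))
      (fun t1 => ?_) (cast_heq _ _) (fun t1 => ?_)) ((cast_heq _ _).symm)
    · refine if_congr ?_ rfl rfl
      rw [Fin.ext_iff, Fin.ext_iff, Fin.coe_cast, Fin.coe_cast, blockIdx_point_val]
      exact hcond t1
    · by_cases hv : t1.val = t.val
      · have e1 : Fin.cast (by rw [sum_ite_single]; exact h1)
            (blockIdx (fun l : Fin n => if l = i then mg else 1) k t1) =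
            (⟨i.val + t.val, by have := i.isLt; omega⟩ : Fin r1) :=
          Fin.ext (by rw [Fin.coe_cast, blockIdx_point_val]; exact (hcond t1).mpr hv)
        have e2 : Fin.cast (if_pos hk) t1 = t := Fin.ext (by rw [Fin.coe_cast]; exact hv)
        rw [dif_pos e1, dif_pos e2]
        exact (cast_heq _ _).trans (cast_heq _ _).symm
      · have e1 : ¬ (Fin.cast (by rw [sum_ite_single]; exact h1)
            (blockIdx (fun l : Fin n => if l = i then mg else 1) k t1) =
            (⟨i.val + t.val, by have := i.isLt; omega⟩ : Fin r1)) := by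
          intro he
          have hval := congrArg Fin.val he
          rw [Fin.coe_cast, blockIdx_point_val] at hval
          exact hv ((hcond t1).mp hval)
        have e2 : ¬ (Fin.cast (if_pos hk) t1 = t) := by
          intro he
          have hval := congrArg Fin.val he
          rw [Fin.coe_cast] at hval
          exact hv hval
        rw [dif_neg e1, dif_neg e2]
        exact (cast_heq _ _).trans (cast_heq _ _).symm
  · have hki : k.val ≠ i.val := fun hv => hk (Fin.ext hv)
    have hne : ∀ t1 : Fin (if k = i then mg else 1),
        (if i < k then k.val - 1 + mg else k.val) + t1.val ≠ i.val + t.val := by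
      intro t1
      have ht1 : t1.val < 1 := lt_of_lt_of_le t1.isLt (le_of_eq (if_neg hk))
      have hvt := t.isLt
      by_cases hik : i < k
      · have := Fin.lt_def.mp hik
        rw [if_pos hik]
        omega
      · have : ¬ i.val < k.val := fun hh => hik (Fin.lt_def.mpr hh)
        rw [if_neg hik]
        omega
    have hne' : ∀ t1 : Fin (if k = i then mg else 1),
        ¬ (Fin.cast (by rw [sum_ite_single]; exact h1)
            (blockIdx (fun l : Fin n => if l = i then mg else 1) k t1) =
          (⟨i.val + t.val, by have := i.isLt; have := t.isLt; omega⟩ : Fin r1)) := by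
      intro t1 he
      have hval := congrArg Fin.val he
      rw [Fin.coe_cast, blockIdx_point_val] at hval
      exact hne t1 hval
    simp only [dif_neg hk]
    refine HEq.trans (b := P.comp (fun _ : Fin 1 => 1) (by simp) P.unit
        (fun _ => P.unit))
      (comp_heq P (if_neg hk) ((key k).trans (if_neg hk)) (fun t1 => ?_)
        (cast_heq _ _) (fun t1 => ?_))
      (HEq.trans (P.unit_comp 1 _ (by simp) _) ((cast_heq _ _).symm))
    · exact if_neg (hne' t1)
    · rw [dif_neg (hne' t1)]
      exact cast_heq _ _

theorem unit_comp' (P : SetOperad) {N n : ℕ} (hN : N = 1) (j : Fin N → ℕ)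
    (h : (∑ t, j t) = n) (f : P.O N) (hf : HEq f P.unit) (g : ∀ t, P.O (j t)) :
    HEq (P.comp j h f g) (g (Fin.cast hN.symm 0)) := by
  subst hN
  have hff : f = P.unit := eq_of_heq hf
  subst hff
  exact P.unit_comp n j h g

theorem comp_unit' (P : SetOperad) {N n : ℕ} (j : Fin N → ℕ) (hj : ∀ t, j t = 1)
    (h : (∑ t, j t) = n) (f : P.O N) (g : ∀ t, P.O (j t))
    (hg : ∀ t, HEq (g t) P.unit) :
    HEq (P.comp j h f g) f := by
  have hn : n = N := by
    rw [← h, Finset.sum_congr rfl (fun t _ => hj t)]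
    simp
  subst hn
  refine heq_of_eq ?_
  rw [comp_congr P (j' := fun _ => (1:ℕ)) (fun k => hj k) f
    (h' := by simp) (g' := fun _ => P.unit) (fun k => hg k)]
  exact P.comp_unit _ (by simp) f

theorem point_sum {n : ℕ} (a : Fin n) (mx : ℕ) {r1 : ℕ}
    (e : (∑ l : Fin n, if l = a then mx else 1) = r1) (b : Fin r1) (my : ℕ) (k : Fin n) :
    (∑ t1 : Fin (if k = a then mx else 1),
        if Fin.cast e (blockIdx (fun l : Fin n => if l = a then mx else 1) k t1) = b
        then my else 1)
      = if (if a < k then k.val - 1 + mx else k.val) ≤ b.val ∧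
            b.val < (if a < k then k.val - 1 + mx else k.val) + (if k = a then mx else 1)
        then (if k = a then mx else 1) - 1 + my else (if k = a then mx else 1) := by
  have step : ∀ t1 : Fin (if k = a then mx else 1),
      (if Fin.cast e (blockIdx (fun l : Fin n => if l = a then mx else 1) k t1) = b
        then my else 1)
        = (fun c => if (∑ l ∈ Finset.univ.filter (fun l : Fin n => l < k),
            if l = a then mx else 1) + c = b.val then my else 1) t1.val :=
    fun t1 => if_congr Fin.ext_iff rfl rfl
  rw [Finset.sum_congr rfl fun t1 _ => step t1,
    Fin.sum_univ_eq_sum_range (fun c => if (∑ l ∈ Finset.univ.filter (fun l : Fin n => l < k),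
      if l = a then mx else 1) + c = b.val then my else 1) (if k = a then mx else 1),
    sum_range_point, offset_point]

theorem pcomp_fam_eval_pos (P : SetOperad) {r1 my : ℕ} (b : Fin r1) (y : P.O my)
    (z : Fin r1) (hz : z.val = b.val) :
    HEq (show P.O (if z = b then my else 1) from
      if hk : z = b then cast (congrArg P.O ((if_pos hk : (if z = b then my else 1) = my))).symm y
      else cast (congrArg P.O ((if_neg hk : (if z = b then my else 1) = 1))).symm P.unit) y := by
  rw [show z = b from Fin.ext hz]
  rw [dif_pos rfl]
  exact cast_heq _ _

theorem pcomp_fam_eval_neg (P : SetOperad) {r1 my : ℕ} (b : Fin r1) (y : P.O my)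
    (z : Fin r1) (hz : z.val ≠ b.val) :
    HEq (show P.O (if z = b then my else 1) from
      if hk : z = b then cast (congrArg P.O ((if_pos hk : (if z = b then my else 1) = my))).symm y
      else cast (congrArg P.O ((if_neg hk : (if z = b then my else 1) = 1))).symm P.unit) P.unit := by
  rw [dif_neg fun he => hz (congrArg Fin.val he)]
  exact cast_heq _ _

theorem pcomp_comm (P : SetOperad) {n mg mh r1 s1 r2 : ℕ}
    (h1 : n - 1 + mh = r1) (h2 : r1 - 1 + mg = r2)
    (h1' : n - 1 + mg = s1) (h2' : s1 - 1 + mh = r2)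
    (f : P.O n) (i j : Fin n) (hij : i < j) (g : P.O mg) (h : P.O mh) :
    pcomp P h2 (pcomp P h1 f j h)
        ⟨i.val, by have := j.isLt; have := Fin.lt_def.mp hij; omega⟩ g =
      pcomp P h2' (pcomp P h1' f i g)
        ⟨j.val + mg - 1, by have := j.isLt; have := Fin.lt_def.mp hij; omega⟩ h := by
  have hvi := i.isLt
  have hvj := j.isLt
  have hij2 := Fin.lt_def.mp hij
  unfold pcomp
  rw [P.comp_assoc, P.comp_assoc]
  refine comp_congr P (fun k => ?_) f (fun k => ?_)
  · rw [point_sum, point_sum]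
    have hvk := k.isLt
    simp only [Fin.val_mk, Fin.lt_def, Fin.ext_iff]
    split_ifs <;> omega
  · by_cases hk : k = i
    · have hkv := congrArg Fin.val hk
      have hkj : ¬ k = j := fun he => by have := congrArg Fin.val he; omega
      have hjk : ¬ j < k := fun hh => by have := Fin.lt_def.mp hh; omega
      have hik : ¬ i < k := fun hh => by have := Fin.lt_def.mp hh; omega
      refine HEq.trans (unit_comp' P (if_neg hkj) _ rfl _
        (pcomp_fam_eval_neg P _ _ _ fun hv => hkj (Fin.ext hv)) _) ?_
      refine HEq.trans (pcomp_fam_eval_pos P _ _ _ ?_) ?_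
      · refine Eq.trans (b := i.val) ?_ rfl
        rw [Fin.coe_cast, blockIdx_point_val, if_neg hjk]
        show k.val + 0 = i.val
        omega
      · refine (HEq.trans (comp_unit' P _ (fun t1 => if_neg fun he => ?_) rfl _ _
          (fun t1 => pcomp_fam_eval_neg P _ _ _ fun hv => ?_))
          (pcomp_fam_eval_pos P _ _ _ hkv)).symm
        · have hv := congrArg Fin.val he
          rw [Fin.coe_cast, blockIdx_point_val, if_neg hik] at hv
          have hv2 : k.val + t1.val = j.val + mg - 1 := hv
          have ht1 := lt_of_lt_of_le t1.isLt (le_of_eq (if_pos hk))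
          omega
        · rw [Fin.coe_cast, blockIdx_point_val, if_neg hik] at hv
          have hv2 : k.val + t1.val = j.val + mg - 1 := hv
          have ht1 := lt_of_lt_of_le t1.isLt (le_of_eq (if_pos hk))
          omega
    · by_cases hkj : k = j
      · have hkv := congrArg Fin.val hkj
        have hjk : ¬ j < k := fun hh => by have := Fin.lt_def.mp hh; omega
        have hik : i < k := Fin.lt_def.mpr (by omega)
        refine HEq.trans (HEq.trans (comp_unit' P _ (fun t1 => if_neg fun he => ?_)
            rfl _ _ (fun t1 => pcomp_fam_eval_neg P _ _ _ fun hv => ?_))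
          (pcomp_fam_eval_pos P _ _ _ hkv)) ?_
        · have hv := congrArg Fin.val he
          rw [Fin.coe_cast, blockIdx_point_val, if_neg hjk] at hv
          have hv2 : k.val + t1.val = i.val := hv
          omega
        · rw [Fin.coe_cast, blockIdx_point_val, if_neg hjk] at hv
          have hv2 : k.val + t1.val = i.val := hv
          omega
        refine (HEq.trans (unit_comp' P (if_neg hk) _ rfl _
          (pcomp_fam_eval_neg P _ _ _ fun hv => hk (Fin.ext hv)) _) ?_).symm
        refine pcomp_fam_eval_pos P _ _ _ ?_
        refine Eq.trans (b := j.val + mg - 1) ?_ rfl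
        rw [Fin.coe_cast, blockIdx_point_val, if_pos hik]
        show k.val - 1 + mg + 0 = j.val + mg - 1
        omega
      · have hki : k.val ≠ i.val := fun hv => hk (Fin.ext hv)
        have hkjv : k.val ≠ j.val := fun hv => hkj (Fin.ext hv)
        refine HEq.trans (HEq.trans (unit_comp' P (if_neg hkj) _ rfl _
            (pcomp_fam_eval_neg P _ _ _ fun hv => hkj (Fin.ext hv)) _)
          (pcomp_fam_eval_neg P _ _ _ fun hv => ?_)) ?_
        · rw [Fin.coe_cast, blockIdx_point_val] at hv
          by_cases hjk : j < k
          · have h3 := Fin.lt_def.mp hjk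
            rw [if_pos hjk] at hv
            have hv2 : k.val - 1 + mh + 0 = i.val := hv
            omega
          · have h3 : ¬ j.val < k.val := fun hh => hjk (Fin.lt_def.mpr hh)
            rw [if_neg hjk] at hv
            have hv2 : k.val + 0 = i.val := hv
            omega
        refine (HEq.trans (unit_comp' P (if_neg hk) _ rfl _
          (pcomp_fam_eval_neg P _ _ _ fun hv => hk (Fin.ext hv)) _)
          (pcomp_fam_eval_neg P _ _ _ fun hv => ?_)).symm
        rw [Fin.coe_cast, blockIdx_point_val] at hv
        by_cases hik : i < k
        · have h3 := Fin.lt_def.mp hik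
          rw [if_pos hik] at hv
          have hv2 : k.val - 1 + mg + 0 = j.val + mg - 1 := hv
          omega
        · have h3 : ¬ i.val < k.val := fun hh => hik (Fin.lt_def.mpr hh)
          rw [if_neg hik] at hv
          have hv2 : k.val + 0 = j.val + mg - 1 := hv
          omega


theorem pcomp_nest' (P : SetOperad) {n mg mh r1 r2 r1' : ℕ}
    (h1 : n - 1 + mg = r1) (h2 : r1 - 1 + mh = r2)
    (h1' : mg - 1 + mh = r1') (h2' : n - 1 + r1' = r2)
    (f : P.O n) (i : Fin n) (g : P.O mg) (t : Fin mg) (h : P.O mh)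
    (b : Fin r1) (hb : b.val = i.val + t.val) :
    pcomp P h2 (pcomp P h1 f i g) b h = pcomp P h2' f i (pcomp P h1' g t h) := by
  rw [show b = ⟨i.val + t.val, hb ▸ b.isLt⟩ from Fin.ext hb]
  exact pcomp_nest P h1 h2 h1' h2' f i g t h

theorem pcomp_comm' (P : SetOperad) {n mg mh r1 s1 r2 : ℕ}
    (h1 : n - 1 + mh = r1) (h2 : r1 - 1 + mg = r2)
    (h1' : n - 1 + mg = s1) (h2' : s1 - 1 + mh = r2)
    (f : P.O n) (i j : Fin n) (hij : i < j) (g : P.O mg) (h : P.O mh)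
    (b1 : Fin r1) (hb1 : b1.val = i.val) (b2 : Fin s1) (hb2 : b2.val = j.val + mg - 1) :
    pcomp P h2 (pcomp P h1 f j h) b1 g = pcomp P h2' (pcomp P h1' f i g) b2 h := by
  rw [show b1 = ⟨i.val, hb1 ▸ b1.isLt⟩ from Fin.ext hb1,
    show b2 = ⟨j.val + mg - 1, hb2 ▸ b2.isLt⟩ from Fin.ext hb2]
  exact pcomp_comm P h1 h2 h1' h2' f i j hij g h

theorem pcomp_congr' (P : SetOperad) {n m r : ℕ} (h h' : n - 1 + m = r)
    {f f' : P.O n} (hf : f = f') {i i' : Fin n} (hii : i.val = i'.val)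
    {g g' : P.O m} (hg : g = g') :
    pcomp P h f i g = pcomp P h' f' i' g' := by
  cases hf
  cases hg
  cases Fin.ext hii
  rfl

theorem coface_zero (P : SetOperad) (mu : P.O 2) (n : ℕ) (i : Fin (n + 2))
    (hi : i.val = 0) (f : P.O n) :
    coface P mu n i f = pcomp P (by omega) mu 1 f := by
  unfold coface
  rw [dif_pos hi]

theorem coface_top (P : SetOperad) (mu : P.O 2) (n : ℕ) (i : Fin (n + 2))
    (hi : i.val = n + 1) (f : P.O n) :
    coface P mu n i f = pcomp P (by omega) mu 0 f := by
  unfold coface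
  rw [dif_neg (by omega), dif_pos hi]

theorem coface_mid (P : SetOperad) (mu : P.O 2) (n : ℕ) (i : Fin (n + 2))
    (h0 : ¬ i.val = 0) (h1 : ¬ i.val = n + 1) (f : P.O n) :
    coface P mu n i f =
      pcomp P (by have := i.isLt; omega) f ⟨i.val - 1, by have := i.isLt; omega⟩ mu := by
  unfold coface
  rw [dif_neg h0, dif_neg h1]

theorem codeg_eq (P : SetOperad) (eps : P.O 0) (n : ℕ) (i : Fin (n + 1))
    (f : P.O (n + 1)) : codeg P eps n i f = pcomp P (by omega) f i eps := rfl


/-- The McClure–Smith construction yields a cosimplicial object: given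
`ε ∈ O(0)` and `μ ∈ O(2)` with `μ(μ, id) = μ(id, μ)` and
`μ(ε, id) = id = μ(id, ε)`, the coface and codegeneracy maps satisfy all the
cosimplicial identities. -/
theorem mcClureSmith_cosimplicial (P : SetOperad) (eps : P.O 0) (mu : P.O 2)
    (hassoc : pcomp P rfl mu 0 mu = pcomp P rfl mu 1 mu)
    (hl : pcomp P rfl mu 0 eps = P.unit)
    (hr : pcomp P rfl mu 1 eps = P.unit) :
    -- `d^j d^i = d^i d^{j-1}` for `i < j`
    (∀ (n i j : ℕ) (hj : j ≤ n + 2) (hij : i < j) (f : P.O n),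
      coface P mu (n + 1) ⟨j, by omega⟩ (coface P mu n ⟨i, by omega⟩ f) =
        coface P mu (n + 1) ⟨i, by omega⟩ (coface P mu n ⟨j - 1, by omega⟩ f)) ∧
    -- `s_j s_i = s_i s_{j+1}` for `i ≤ j`
    (∀ (n i j : ℕ) (hij : i ≤ j) (hj : j ≤ n) (f : P.O (n + 2)),
      codeg P eps n ⟨j, by omega⟩ (codeg P eps (n + 1) ⟨i, by omega⟩ f) =
        codeg P eps n ⟨i, by omega⟩ (codeg P eps (n + 1) ⟨j + 1, by omega⟩ f)) ∧
    -- `s_j d^i = d^i s_{j-1}` for `i < j`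
    (∀ (m i j : ℕ) (hj : j ≤ m + 1) (hij : i < j) (f : P.O (m + 1)),
      codeg P eps (m + 1) ⟨j, by omega⟩ (coface P mu (m + 1) ⟨i, by omega⟩ f) =
        coface P mu m ⟨i, by omega⟩ (codeg P eps m ⟨j - 1, by omega⟩ f)) ∧
    -- `s_j d^i = id` for `i = j` and `i = j + 1`
    (∀ (m i j : ℕ) (hj : j ≤ m + 1) (hij : i = j ∨ i = j + 1) (f : P.O (m + 1)),
      codeg P eps (m + 1) ⟨j, by omega⟩ (coface P mu (m + 1) ⟨i, by omega⟩ f) = f) ∧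
    -- `s_j d^i = d^{i-1} s_j` for `i > j + 1`
    (∀ (m i j : ℕ) (hj : j ≤ m + 1) (hij : j + 1 < i) (hi : i ≤ m + 2)
        (f : P.O (m + 1)),
      codeg P eps (m + 1) ⟨j, by omega⟩ (coface P mu (m + 1) ⟨i, by omega⟩ f) =
        coface P mu m ⟨i - 1, by omega⟩ (codeg P eps m ⟨j, by omega⟩ f)) := by
  refine ⟨?_, ?_, ?_, ?_, ?_⟩
  · -- d^j d^i = d^i d^{j-1}
    intro n i j hj hij f
    by_cases hi0 : i = 0
    · subst hi0
      by_cases hjtop : j = n + 2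
      · subst hjtop
        rw [coface_zero P mu n ⟨0, by omega⟩ rfl f,
          coface_top P mu (n + 1) ⟨n + 2, by omega⟩ rfl,
          coface_top P mu n ⟨n + 2 - 1, by omega⟩ rfl f,
          coface_zero P mu (n + 1) ⟨0, by omega⟩ rfl]
        refine ((pcomp_nest' P (show 2 - 1 + 2 = 3 by omega) (show 3 - 1 + n = n + 2 by omega)
          (show 2 - 1 + n = n + 1 by omega) (show 2 - 1 + (n + 1) = n + 2 by omega)
          mu 0 mu 1 f ⟨1, by omega⟩ rfl).symm).trans ?_
        refine Eq.trans ?_ (pcomp_nest' P (show 2 - 1 + 2 = 3 by omega)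
          (show 3 - 1 + n = n + 2 by omega) (show 2 - 1 + n = n + 1 by omega)
          (show 2 - 1 + (n + 1) = n + 2 by omega) mu 1 mu 0 f ⟨1, by omega⟩ rfl)
        exact pcomp_congr' P _ _ hassoc rfl rfl
      · by_cases hj1 : j = 1
        · subst hj1
          rw [coface_zero P mu n ⟨0, by omega⟩ rfl f,
            coface_mid P mu (n + 1) ⟨1, by omega⟩ (show ¬ (1:ℕ) = 0 by omega)
              (show ¬ (1:ℕ) = n + 2 by omega),
            coface_zero P mu (n + 1) ⟨0, by omega⟩ rfl]
          refine (pcomp_comm' P (show 2 - 1 + n = n + 1 by omega)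
            (show (n + 1) - 1 + 2 = n + 2 by omega) (show 2 - 1 + 2 = 3 by omega)
            (show 3 - 1 + n = n + 2 by omega) mu 0 1 (by decide) mu f
            ⟨0, by omega⟩ rfl ⟨2, by omega⟩ rfl).trans ?_
          refine Eq.trans ?_ (pcomp_nest' P (show 2 - 1 + 2 = 3 by omega)
            (show 3 - 1 + n = n + 2 by omega) (show 2 - 1 + n = n + 1 by omega)
            (show 2 - 1 + (n + 1) = n + 2 by omega) mu 1 mu 1 f ⟨2, by omega⟩ rfl)
          exact pcomp_congr' P _ _ hassoc rfl rfl
        · rw [coface_zero P mu n ⟨0, by omega⟩ rfl f,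
            coface_mid P mu (n + 1) ⟨j, by omega⟩ (show ¬ j = 0 by omega)
              (show ¬ j = n + 2 by omega),
            coface_mid P mu n ⟨j - 1, by omega⟩ (show ¬ j - 1 = 0 by omega)
              (show ¬ j - 1 = n + 1 by omega) f,
            coface_zero P mu (n + 1) ⟨0, by omega⟩ rfl]
          refine (pcomp_nest' P (show 2 - 1 + n = n + 1 by omega)
            (show (n + 1) - 1 + 2 = n + 2 by omega) (show n - 1 + 2 = n + 1 by omega)
            (show 2 - 1 + (n + 1) = n + 2 by omega) mu 1 f ⟨j - 1 - 1, by omega⟩ mu _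
            (show j - 1 = 1 + (j - 1 - 1) by omega)).trans ?_
          rfl
    · by_cases hitop : i = n + 1
      · subst hitop
        have hjv : j = n + 2 := by omega
        subst hjv
        rw [coface_top P mu n ⟨n + 1, by omega⟩ rfl f,
          coface_top P mu (n + 1) ⟨n + 2, by omega⟩ rfl,
          coface_top P mu n ⟨n + 2 - 1, by omega⟩ rfl f,
          coface_mid P mu (n + 1) ⟨n + 1, by omega⟩ (show ¬ n + 1 = 0 by omega)
            (show ¬ n + 1 = n + 2 by omega)]
        refine ((pcomp_nest' P (show 2 - 1 + 2 = 3 by omega)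
          (show 3 - 1 + n = n + 2 by omega) (show 2 - 1 + n = n + 1 by omega)
          (show 2 - 1 + (n + 1) = n + 2 by omega) mu 0 mu 0 f ⟨0, by omega⟩ rfl).symm).trans ?_
        refine Eq.trans ?_ (pcomp_comm' P (show 2 - 1 + 2 = 3 by omega)
          (show 3 - 1 + n = n + 2 by omega) (show 2 - 1 + n = n + 1 by omega)
          (show (n + 1) - 1 + 2 = n + 2 by omega) mu 0 1 (by decide) f mu
          ⟨0, by omega⟩ rfl ⟨n + 1 - 1, by omega⟩ (show n = 1 + n - 1 by omega))
        exact pcomp_congr' P _ _ hassoc rfl rfl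
      · by_cases hjtop : j = n + 2
        · subst hjtop
          rw [coface_mid P mu n ⟨i, by omega⟩ (show ¬ i = 0 by omega)
              (show ¬ i = n + 1 by omega) f,
            coface_top P mu (n + 1) ⟨n + 2, by omega⟩ rfl,
            coface_top P mu n ⟨n + 2 - 1, by omega⟩ rfl f,
            coface_mid P mu (n + 1) ⟨i, by omega⟩ (show ¬ i = 0 by omega)
              (show ¬ i = n + 2 by omega)]
          exact (pcomp_nest' P (show 2 - 1 + n = n + 1 by omega)
            (show (n + 1) - 1 + 2 = n + 2 by omega) (show n - 1 + 2 = n + 1 by omega)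
            (show 2 - 1 + (n + 1) = n + 2 by omega) mu 0 f ⟨i - 1, by omega⟩ mu
            ⟨i - 1, by omega⟩ (show i - 1 = 0 + (i - 1) by omega)).symm
        · by_cases hadj : j = i + 1
          · subst hadj
            rw [coface_mid P mu n ⟨i, by omega⟩ (show ¬ i = 0 by omega)
                (show ¬ i = n + 1 by omega) f,
              coface_mid P mu (n + 1) ⟨i + 1, by omega⟩ (show ¬ i + 1 = 0 by omega)
                (show ¬ i + 1 = n + 2 by omega),
              coface_mid P mu n ⟨i + 1 - 1, by omega⟩ (show ¬ i + 1 - 1 = 0 by omega)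
                (show ¬ i + 1 - 1 = n + 1 by omega) f,
              coface_mid P mu (n + 1) ⟨i, by omega⟩ (show ¬ i = 0 by omega)
                (show ¬ i = n + 2 by omega)]
            refine (pcomp_nest' P (show n - 1 + 2 = n + 1 by omega)
              (show (n + 1) - 1 + 2 = n + 2 by omega) (show 2 - 1 + 2 = 3 by omega)
              (show n - 1 + 3 = n + 2 by omega) f ⟨i - 1, by omega⟩ mu 1 mu _
              (show i + 1 - 1 = (i - 1) + 1 by omega)).trans ?_
            refine Eq.trans ?_ ((pcomp_nest' P (show n - 1 + 2 = n + 1 by omega)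
              (show (n + 1) - 1 + 2 = n + 2 by omega) (show 2 - 1 + 2 = 3 by omega)
              (show n - 1 + 3 = n + 2 by omega) f ⟨i + 1 - 1 - 1, by omega⟩ mu 0 mu
              ⟨i - 1, by omega⟩ (show i - 1 = (i + 1 - 1 - 1) + 0 by omega)).symm)
            exact pcomp_congr' P _ _ rfl (show i - 1 = i + 1 - 1 - 1 by omega) hassoc.symm
          · rw [coface_mid P mu n ⟨i, by omega⟩ (show ¬ i = 0 by omega)
                (show ¬ i = n + 1 by omega) f,
              coface_mid P mu (n + 1) ⟨j, by omega⟩ (show ¬ j = 0 by omega)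
                (show ¬ j = n + 2 by omega),
              coface_mid P mu n ⟨j - 1, by omega⟩ (show ¬ j - 1 = 0 by omega)
                (show ¬ j - 1 = n + 1 by omega) f,
              coface_mid P mu (n + 1) ⟨i, by omega⟩ (show ¬ i = 0 by omega)
                (show ¬ i = n + 2 by omega)]
            exact (pcomp_comm' P (show n - 1 + 2 = n + 1 by omega)
              (show (n + 1) - 1 + 2 = n + 2 by omega) (show n - 1 + 2 = n + 1 by omega)
              (show (n + 1) - 1 + 2 = n + 2 by omega) f ⟨i - 1, by omega⟩
              ⟨j - 1 - 1, by omega⟩ (show i - 1 < j - 1 - 1 by omega) mu mu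
              ⟨i - 1, by omega⟩ rfl ⟨j - 1, by omega⟩
              (show j - 1 = (j - 1 - 1) + 2 - 1 by omega)).symm
  · -- s_j s_i = s_i s_{j+1}
    intro n i j hij hj f
    exact (pcomp_comm' P (show (n + 2) - 1 + 0 = n + 1 by omega)
      (show (n + 1) - 1 + 0 = n by omega) (show (n + 2) - 1 + 0 = n + 1 by omega)
      (show (n + 1) - 1 + 0 = n by omega) f ⟨i, by omega⟩ ⟨j + 1, by omega⟩
      (show i < j + 1 by omega) eps eps ⟨i, by omega⟩ rfl ⟨j, by omega⟩
      (show j = (j + 1) + 0 - 1 by omega)).symm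
  · -- s_j d^i = d^i s_{j-1} for i < j
    intro m i j hj hij f
    by_cases hi0 : i = 0
    · subst hi0
      rw [coface_zero P mu (m + 1) ⟨0, by omega⟩ rfl f,
        coface_zero P mu m ⟨0, by omega⟩ rfl]
      exact pcomp_nest' P (show 2 - 1 + (m + 1) = m + 2 by omega)
        (show (m + 2) - 1 + 0 = m + 1 by omega) (show (m + 1) - 1 + 0 = m by omega)
        (show 2 - 1 + m = m + 1 by omega) mu 1 f ⟨j - 1, by omega⟩ eps
        ⟨j, by omega⟩ (show j = 1 + (j - 1) by omega)
    · rw [coface_mid P mu (m + 1) ⟨i, by omega⟩ (show ¬ i = 0 by omega)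
          (show ¬ i = m + 2 by omega) f,
        coface_mid P mu m ⟨i, by omega⟩ (show ¬ i = 0 by omega)
          (show ¬ i = m + 1 by omega)]
      exact (pcomp_comm' P (show (m + 1) - 1 + 0 = m by omega)
        (show m - 1 + 2 = m + 1 by omega) (show (m + 1) - 1 + 2 = m + 2 by omega)
        (show (m + 2) - 1 + 0 = m + 1 by omega) f ⟨i - 1, by omega⟩ ⟨j - 1, by omega⟩
        (show i - 1 < j - 1 by omega) mu eps ⟨i - 1, by omega⟩ rfl ⟨j, by omega⟩
        (show j = (j - 1) + 2 - 1 by omega)).symm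
  · -- s_j d^i = id
    intro m i j hj hij f
    rcases hij with rfl | rfl
    · by_cases hj0 : i = 0
      · subst hj0
        rw [coface_zero P mu (m + 1) ⟨0, by omega⟩ rfl f]
        refine (pcomp_comm' P (show 2 - 1 + (m + 1) = m + 2 by omega)
          (show (m + 2) - 1 + 0 = m + 1 by omega) (show 2 - 1 + 0 = 1 by omega)
          (show 1 - 1 + (m + 1) = m + 1 by omega) mu 0 1 (by decide) eps f
          ⟨0, by omega⟩ rfl ⟨0, by omega⟩ (show 0 = 1 + 0 - 1 by omega)).trans ?_
        refine Eq.trans (pcomp_congr' P _ (show 1 - 1 + (m + 1) = m + 1 by omega) hl rfl rfl) ?_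
        exact unit_pcomp P _ f
      · rw [coface_mid P mu (m + 1) ⟨i, by omega⟩ (show ¬ i = 0 by omega)
            (show ¬ i = m + 2 by omega) f]
        refine (pcomp_nest' P (show (m + 1) - 1 + 2 = m + 2 by omega)
          (show (m + 2) - 1 + 0 = m + 1 by omega) (show 2 - 1 + 0 = 1 by omega)
          (show (m + 1) - 1 + 1 = m + 1 by omega) f ⟨i - 1, by omega⟩ mu 1 eps _
          (show i = (i - 1) + 1 by omega)).trans ?_
        refine Eq.trans (pcomp_congr' P _ (show (m + 1) - 1 + 1 = m + 1 by omega) rfl rfl hr) ?_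
        exact pcomp_unit P _ f _
    · by_cases hjtop : j = m + 1
      · subst hjtop
        rw [coface_top P mu (m + 1) ⟨m + 1 + 1, by omega⟩ rfl f]
        refine ((pcomp_comm' P (show 2 - 1 + 0 = 1 by omega)
          (show 1 - 1 + (m + 1) = m + 1 by omega) (show 2 - 1 + (m + 1) = m + 2 by omega)
          (show (m + 2) - 1 + 0 = m + 1 by omega) mu 0 1 (by decide) f eps
          ⟨0, by omega⟩ rfl ⟨m + 1, by omega⟩
          (show m + 1 = 1 + (m + 1) - 1 by omega)).symm).trans ?_
        refine Eq.trans (pcomp_congr' P _ (show 1 - 1 + (m + 1) = m + 1 by omega) hr rfl rfl) ?_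
        exact unit_pcomp P _ f
      · rw [coface_mid P mu (m + 1) ⟨j + 1, by omega⟩ (show ¬ j + 1 = 0 by omega)
            (show ¬ j + 1 = m + 2 by omega) f]
        refine (pcomp_nest' P (show (m + 1) - 1 + 2 = m + 2 by omega)
          (show (m + 2) - 1 + 0 = m + 1 by omega) (show 2 - 1 + 0 = 1 by omega)
          (show (m + 1) - 1 + 1 = m + 1 by omega) f ⟨j + 1 - 1, by omega⟩ mu 0 eps _
          (show j = (j + 1 - 1) + 0 by omega)).trans ?_
        refine Eq.trans (pcomp_congr' P _ (show (m + 1) - 1 + 1 = m + 1 by omega) rfl rfl hl) ?_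
        exact pcomp_unit P _ f _
  · -- s_j d^i = d^{i-1} s_j
    intro m i j hj hij hi f
    by_cases hitop : i = m + 2
    · subst hitop
      rw [coface_top P mu (m + 1) ⟨m + 2, by omega⟩ rfl f,
        coface_top P mu m ⟨m + 2 - 1, by omega⟩ rfl]
      exact pcomp_nest' P (show 2 - 1 + (m + 1) = m + 2 by omega)
        (show (m + 2) - 1 + 0 = m + 1 by omega) (show (m + 1) - 1 + 0 = m by omega)
        (show 2 - 1 + m = m + 1 by omega) mu 0 f ⟨j, by omega⟩ eps
        ⟨j, by omega⟩ (show j = 0 + j by omega)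
    · rw [coface_mid P mu (m + 1) ⟨i, by omega⟩ (show ¬ i = 0 by omega)
          (show ¬ i = m + 2 by omega) f,
        coface_mid P mu m ⟨i - 1, by omega⟩ (show ¬ i - 1 = 0 by omega)
          (show ¬ i - 1 = m + 1 by omega)]
      exact pcomp_comm' P (show (m + 1) - 1 + 2 = m + 2 by omega)
        (show (m + 2) - 1 + 0 = m + 1 by omega) (show (m + 1) - 1 + 0 = m by omega)
        (show m - 1 + 2 = m + 1 by omega) f ⟨j, by omega⟩ ⟨i - 1, by omega⟩
        (show j < i - 1 by omega) eps mu ⟨j, by omega⟩ rfl ⟨i - 1 - 1, by omega⟩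
        (show i - 1 - 1 = (i - 1) + 0 - 1 by omega)
end

section
/- For a fixed graded set Z, the functor X ↦ X ∘ Z on graded sets preserves reflexive coequalizers: if d₀, d₁ : X₁ → X₀ is a reflexive pair of maps of graded sets with coequalizer q : X₀ → X, then the induced map from the coequalizer of (d₀ ∘ Z, d₁ ∘ Z) : X₁ ∘ Z → X₀ ∘ Z to X ∘ Z is an isomorphism. -/
/-- A graded set: a sequence of sets indexed by nonnegative integers. -/
abbrev GradedSet : Type 1 := ℕ → Type

/-- The composition product of graded sets. -/
def gcomp (X Y : GradedSet) : GradedSet :=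
  fun n => Σ i : ℕ, Σ j : {j : Fin i → ℕ // ∑ k, j k = n}, X i × ∀ k, Y (j.1 k)

/-- Maps of graded sets. -/
abbrev GradedMap (X Y : GradedSet) : Type := ∀ n, X n → Y n

/-- The identity graded map. -/
def gid (X : GradedSet) : GradedMap X X := fun _ x => x

/-- Functoriality of the composition product. -/
def gcompMap {X X' Y Y' : GradedSet} (f : GradedMap X X') (g : GradedMap Y Y') :
    GradedMap (gcomp X Y) (gcomp X' Y') :=
  fun _ a => ⟨a.1, a.2.1, f a.1 a.2.2.1, fun k => g (a.2.1.1 k) (a.2.2.2 k)⟩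

/-- The levelwise relation whose quotient is the coequalizer of a parallel
pair of graded maps. -/
def gRel {A B : GradedSet} (d0 d1 : GradedMap A B) (n : ℕ) : B n → B n → Prop :=
  fun a b => ∃ x : A n, d0 n x = a ∧ d1 n x = b

/-- The canonical map from the coequalizer of `(d₀ ∘ Z, d₁ ∘ Z)` to
`X ∘ Z`, where `X` is the coequalizer of `(d₀, d₁)`. -/
def inducedCoeqMap {X1 X0 Z : GradedSet} (d0 d1 : GradedMap X1 X0) (n : ℕ) :
    Quot (gRel (gcompMap d0 (gid Z)) (gcompMap d1 (gid Z)) n) →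
      gcomp (fun m => Quot (gRel d0 d1 m)) Z n :=
  Quot.lift (gcompMap (fun m (x : X0 m) => Quot.mk (gRel d0 d1 m) x) (gid Z) n) (by
    rintro a b ⟨x, rfl, rfl⟩
    obtain ⟨i, j, u, z⟩ := x
    exact congrArg
      (fun w => (⟨i, j, w, fun k => z k⟩ : gcomp (fun m => Quot (gRel d0 d1 m)) Z n))
      (Quot.sound ⟨u, rfl, rfl⟩))

lemma lift_eqvGen {X1 X0 Z : GradedSet} (d0 d1 : GradedMap X1 X0) {n i : ℕ}
    (j : {j : Fin i → ℕ // ∑ k, j k = n}) (z : ∀ k, Z (j.1 k))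
    {u u' : X0 i} (h : Relation.EqvGen (gRel d0 d1 i) u u') :
    Quot.mk (gRel (gcompMap d0 (gid Z)) (gcompMap d1 (gid Z)) n) ⟨i, j, u, z⟩ =
    Quot.mk (gRel (gcompMap d0 (gid Z)) (gcompMap d1 (gid Z)) n) ⟨i, j, u', z⟩ := by
  induction h with
  | rel a b hab =>
    obtain ⟨x, rfl, rfl⟩ := hab
    exact Quot.sound ⟨⟨i, j, x, z⟩, rfl, rfl⟩
  | refl => rfl
  | symm _ _ _ ih => exact ih.symm
  | trans _ _ _ _ _ ih1 ih2 => exact ih1.trans ih2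

/-- For a fixed graded set `Z`, the functor `X ↦ X ∘ Z` preserves reflexive
coequalizers: for a reflexive pair `(d₀, d₁)` the induced map from the
coequalizer of `(d₀ ∘ Z, d₁ ∘ Z)` to `X ∘ Z` is an isomorphism. -/
theorem gcomp_preserves_reflexive_coeq {X1 X0 Z : GradedSet}
    (d0 d1 : GradedMap X1 X0) (s : GradedMap X0 X1)
    (hs0 : ∀ n x, d0 n (s n x) = x) (hs1 : ∀ n x, d1 n (s n x) = x) (n : ℕ) :
    Function.Bijective (inducedCoeqMap (Z := Z) d0 d1 n) := by
  constructor
  · rintro ⟨a⟩ ⟨b⟩ h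
    obtain ⟨i, j, u, z⟩ := a
    obtain ⟨i', j', u', z'⟩ := b
    simp only [inducedCoeqMap, gcompMap, gid] at h
    obtain ⟨rfl, h⟩ := Sigma.mk.inj_iff.mp h
    obtain ⟨rfl, h⟩ := Sigma.mk.inj_iff.mp (eq_of_heq h)
    obtain ⟨hq, hz⟩ := Prod.mk_inj.mp (eq_of_heq h)
    have hz' : z = z' := hz
    subst hz'
    exact lift_eqvGen d0 d1 j z (Quot.eqvGen_exact hq)
  · rintro ⟨i, j, q, z⟩
    obtain ⟨u, rfl⟩ := q.exists_rep
    exact ⟨Quot.mk _ ⟨i, j, u, z⟩, rfl⟩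
end
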